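/- Fix positive integers n, T, k, r, m. For each i = 1,…,n let y_i ∈ ℝ^T, let x_i be a T×k real matrix, Δb_i a T×m real matrix, Ω_{bi} an invertible m×m real matrix, Ω_{bui} ∈ ℝ^m, and d_i ∈ ℝ^k. Let F be a T×r real matrix with F'F invertible, set M_F = I_T − F(F'F)^{-1}F', and suppose S = ∑_{i=1}^n x_i'M_F x_i is invertible. Define θ_i = (1/T)·x_i'M_F Δb_i Ω_{bi}^{-1}Ω_{bui} + d_i, the bias-corrected estimator β_BC = S^{-1}∑_i x_i'M_F y_i − (1/T)·((1/(nT²))·S)^{-1}·((1/n)∑_i θ_i), the corrected data y_i⁺ = y_i − Δb_i Ω_{bi}^{-1}Ω_{bui}, and the fully-modified estimator β_FM = S^{-1}∑_i (x_i'M_F y_i⁺ − T·d_i). Then β_BC = β_FM. -/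

import Mathlib

open Matrix BigOperators

/-!
The two estimators differ only in where the correction enters. Rescaling `S` by `1 / (n T²)`
and averaging the `θ i` by `1 / n` cancel against the factor `1 / T` up to a net factor `T`,
so `β_BC = S⁻¹ (∑ x_i' M_F y_i - T ∑ θ_i)`. Expanding `T θ_i` and `y_i⁺` shows that the
summands of the two estimators agree term by term.
-/

namespace Matrix

variable {K : Type*} [Field K] {p q s : Type*}

theorem smul_smul_inv_mul_smul [Fintype p] [DecidableEq p] {S : Matrix p p K}
    (hS : IsUnit S.det) {a : K} (ha : a ≠ 0) (b c : K) (v : Matrix p s K) :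
    c • ((a • S)⁻¹ * (b • v)) = S⁻¹ * ((c * a⁻¹ * b) • v) := by
  have : Invertible a := invertibleOfNonzero ha
  rw [inv_smul S a hS, invOf_eq_inv]
  simp only [Matrix.smul_mul, Matrix.mul_smul, smul_smul]
  congr 1
  ring

theorem mul_sub_smul_inv_smul_add [Fintype q] (A : Matrix p q K) (y C : Matrix q s K)
    (d : Matrix p s K) {t : K} (ht : t ≠ 0) :
    A * y - t • (t⁻¹ • (A * C) + d) = A * (y - C) - t • d := by
  rw [smul_add, smul_smul, mul_inv_cancel₀ ht, one_smul, Matrix.mul_sub]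
  abel

end Matrix

theorem stmt_0_general
    (n T k m : ℕ) (hn : 0 < n) (hT : 0 < T)
    (y : Fin n → Matrix (Fin T) (Fin 1) ℝ)
    (x : Fin n → Matrix (Fin T) (Fin k) ℝ)
    (Δb : Fin n → Matrix (Fin T) (Fin m) ℝ)
    (Ωb : Fin n → Matrix (Fin m) (Fin m) ℝ)
    (Ωbu : Fin n → Matrix (Fin m) (Fin 1) ℝ)
    (d : Fin n → Matrix (Fin k) (Fin 1) ℝ)
    (MF : Matrix (Fin T) (Fin T) ℝ)
    (S : Matrix (Fin k) (Fin k) ℝ)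
    (hSinv : IsUnit S.det)
    (θ : Fin n → Matrix (Fin k) (Fin 1) ℝ)
    (hθ : ∀ i, θ i = (1 / (T : ℝ)) • ((x i)ᵀ * MF * Δb i * (Ωb i)⁻¹ * Ωbu i) + d i)
    (βBC : Matrix (Fin k) (Fin 1) ℝ)
    (hβBC : βBC = S⁻¹ * (∑ i, (x i)ᵀ * MF * y i)
      - (1 / (T : ℝ)) • (((1 / ((n : ℝ) * (T : ℝ) ^ 2)) • S)⁻¹ * ((1 / (n : ℝ)) • ∑ i, θ i)))
    (yplus : Fin n → Matrix (Fin T) (Fin 1) ℝ)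
    (hyplus : ∀ i, yplus i = y i - Δb i * (Ωb i)⁻¹ * Ωbu i)
    (βFM : Matrix (Fin k) (Fin 1) ℝ)
    (hβFM : βFM = S⁻¹ * (∑ i, ((x i)ᵀ * MF * yplus i - (T : ℝ) • d i))) :
    βBC = βFM := by
  have hn' : (n : ℝ) ≠ 0 := by positivity
  have hT' : (T : ℝ) ≠ 0 := by positivity
  have hscale : (1 / (T : ℝ)) * (1 / ((n : ℝ) * (T : ℝ) ^ 2))⁻¹ * (1 / (n : ℝ)) = T := by
    field_simp
  have hsummand : ∀ i, (x i)ᵀ * MF * y i - (T : ℝ) • θ i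
      = (x i)ᵀ * MF * yplus i - (T : ℝ) • d i := fun i => by
    rw [hθ i, hyplus i, one_div, ← mul_sub_smul_inv_smul_add _ _ _ _ hT']
    simp only [Matrix.mul_assoc]
  rw [hβBC, hβFM, smul_smul_inv_mul_smul hSinv (by positivity), hscale, ← Matrix.mul_sub,
    Finset.smul_sum, ← Finset.sum_sub_distrib]
  simp only [hsummand]

theorem stmt_0
    (n T k r m : ℕ) (hn : 0 < n) (hT : 0 < T)
    (y : Fin n → Matrix (Fin T) (Fin 1) ℝ)
    (x : Fin n → Matrix (Fin T) (Fin k) ℝ)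
    (Δb : Fin n → Matrix (Fin T) (Fin m) ℝ)
    (Ωb : Fin n → Matrix (Fin m) (Fin m) ℝ)
    (hΩb : ∀ i, IsUnit (Ωb i).det)
    (Ωbu : Fin n → Matrix (Fin m) (Fin 1) ℝ)
    (d : Fin n → Matrix (Fin k) (Fin 1) ℝ)
    (F : Matrix (Fin T) (Fin r) ℝ)
    (hF : IsUnit (Fᵀ * F).det)
    (MF : Matrix (Fin T) (Fin T) ℝ)
    (hMF : MF = 1 - F * (Fᵀ * F)⁻¹ * Fᵀ)
    (S : Matrix (Fin k) (Fin k) ℝ)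
    (hS : S = ∑ i, (x i)ᵀ * MF * x i)
    (hSinv : IsUnit S.det)
    (θ : Fin n → Matrix (Fin k) (Fin 1) ℝ)
    (hθ : ∀ i, θ i = (1 / (T : ℝ)) • ((x i)ᵀ * MF * Δb i * (Ωb i)⁻¹ * Ωbu i) + d i)
    (βBC : Matrix (Fin k) (Fin 1) ℝ)
    (hβBC : βBC = S⁻¹ * (∑ i, (x i)ᵀ * MF * y i)
      - (1 / (T : ℝ)) • (((1 / ((n : ℝ) * (T : ℝ) ^ 2)) • S)⁻¹ * ((1 / (n : ℝ)) • ∑ i, θ i)))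
    (yplus : Fin n → Matrix (Fin T) (Fin 1) ℝ)
    (hyplus : ∀ i, yplus i = y i - Δb i * (Ωb i)⁻¹ * Ωbu i)
    (βFM : Matrix (Fin k) (Fin 1) ℝ)
    (hβFM : βFM = S⁻¹ * (∑ i, ((x i)ᵀ * MF * yplus i - (T : ℝ) • d i))) :
    βBC = βFM :=
  stmt_0_general n T k m hn hT y x Δb Ωb Ωbu d MF S hSinv θ hθ βBC hβBC yplus hyplus βFM hβFM
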